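/- arXiv:1703.05669 — 13 statements merged into one kernel-verified Lean document; each statement's English description precedes it below -/
import Mathlib

section
/- The function w(n,m) = 2cpq/(pq + 2c(mp+nq)) + 2c satisfies the lattice potential KdV equation (p−q+ŵ−w̃)(p+q+w−ŵ̃) = p²−q², where w̃(n,m)=w(n+1,m), ŵ(n,m)=w(n,m+1), ŵ̃(n,m)=w(n+1,m+1), at all lattice points where the denominators are nonzero. -/
/-!
Writing `D = pq + 2c(mp + nq)`, the shifts act by `D̃ = D + 2cq` and `D̂ = D + 2cp`, and the constant
`2c` cancels from both factors of the equation. For `w = 2cpq/D`, the first factor is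
`(p - q) D D̂̃ / (D̂ D̃)` and the second is `(p + q) D̂ D̃ / (D D̂̃)`, so their product is `p² - q²`.
-/

section LatticePotentialKdV

variable {K : Type*} [Field K] (p q a D : K)

theorem lpKdV_rational_factor_left (hp : D + p * a ≠ 0) (hq : D + q * a ≠ 0) :
    p - q + p * q * a / (D + p * a) - p * q * a / (D + q * a)
      = (p - q) * D * (D + p * a + q * a) / ((D + p * a) * (D + q * a)) := by
  field_simp
  ring

theorem lpKdV_rational_factor_right (h0 : D ≠ 0) (hpq : D + p * a + q * a ≠ 0) :
    p + q + p * q * a / D - p * q * a / (D + p * a + q * a)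
      = (p + q) * (D + p * a) * (D + q * a) / (D * (D + p * a + q * a)) := by
  field_simp
  ring

theorem lpKdV_rational (h0 : D ≠ 0) (hp : D + p * a ≠ 0) (hq : D + q * a ≠ 0)
    (hpq : D + p * a + q * a ≠ 0) :
    (p - q + p * q * a / (D + p * a) - p * q * a / (D + q * a))
      * (p + q + p * q * a / D - p * q * a / (D + p * a + q * a)) = p ^ 2 - q ^ 2 := by
  rw [lpKdV_rational_factor_left p q a D hp hq, lpKdV_rational_factor_right p q a D h0 hpq]
  field_simp
  ring

end LatticePotentialKdV

theorem stmt_1_general (p q c : ℝ)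
    (w : ℤ → ℤ → ℝ)
    (hw : ∀ n m : ℤ, w n m = 2*c*p*q / (p*q + 2*c*((m : ℝ)*p + (n : ℝ)*q)) + 2*c)
    (n m : ℤ)
    (h1 : p*q + 2*c*((m : ℝ)*p + (n : ℝ)*q) ≠ 0)
    (h2 : p*q + 2*c*((m : ℝ)*p + ((n : ℝ)+1)*q) ≠ 0)
    (h3 : p*q + 2*c*(((m : ℝ)+1)*p + (n : ℝ)*q) ≠ 0)
    (h4 : p*q + 2*c*(((m : ℝ)+1)*p + ((n : ℝ)+1)*q) ≠ 0) :
    (p - q + w n (m+1) - w (n+1) m) * (p + q + w n m - w (n+1) (m+1)) = p^2 - q^2 := by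
  set D := p*q + 2*c*((m : ℝ)*p + (n : ℝ)*q)
  have shift_n : p*q + 2*c*((m : ℝ)*p + ((n : ℝ)+1)*q) = D + q*(2*c) := by ring
  have shift_m : p*q + 2*c*(((m : ℝ)+1)*p + (n : ℝ)*q) = D + p*(2*c) := by ring
  have shift_nm : p*q + 2*c*(((m : ℝ)+1)*p + ((n : ℝ)+1)*q) = D + p*(2*c) + q*(2*c) := by ring
  rw [shift_n] at h2
  rw [shift_m] at h3
  rw [shift_nm] at h4
  calc (p - q + w n (m+1) - w (n+1) m) * (p + q + w n m - w (n+1) (m+1))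
      = (p - q + p*q*(2*c) / (D + p*(2*c)) - p*q*(2*c) / (D + q*(2*c)))
          * (p + q + p*q*(2*c) / D - p*q*(2*c) / (D + p*(2*c) + q*(2*c))) := by
        simp only [hw, Int.cast_add, Int.cast_one, shift_n, shift_m, shift_nm]
        ring
    _ = p^2 - q^2 := lpKdV_rational p q (2*c) D h1 h3 h2 h4

/-- The N=2 rational solution `w(n,m) = 2cpq/(pq + 2c(mp+nq)) + 2c` satisfies
the lattice potential KdV equation `(p−q+ŵ−w̃)(p+q+w−ŵ̃) = p²−q²`. -/
theorem stmt_1 (p q c : ℝ) (hp : p ≠ 0) (hq : q ≠ 0) (hc : c ≠ 0)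
    (w : ℤ → ℤ → ℝ)
    (hw : ∀ n m : ℤ, w n m = 2*c*p*q / (p*q + 2*c*((m : ℝ)*p + (n : ℝ)*q)) + 2*c)
    (n m : ℤ)
    (h1 : p*q + 2*c*((m : ℝ)*p + (n : ℝ)*q) ≠ 0)
    (h2 : p*q + 2*c*((m : ℝ)*p + ((n : ℝ)+1)*q) ≠ 0)
    (h3 : p*q + 2*c*(((m : ℝ)+1)*p + (n : ℝ)*q) ≠ 0)
    (h4 : p*q + 2*c*(((m : ℝ)+1)*p + ((n : ℝ)+1)*q) ≠ 0) :
    (p - q + w n (m+1) - w (n+1) m) * (p + q + w n m - w (n+1) (m+1)) = p^2 - q^2 :=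
  stmt_1_general p q c w hw n m h1 h2 h3 h4
end

section
/- The function v_a(n,m) = −2cpq/(a(pq + 2c(mp+nq))) + 1 satisfies the lattice potential modified KdV equation v_a((p−a)v̂_a − (q−a)ṽ_a) = v̂̃_a((p+a)ṽ_a − (q+a)v̂_a), at all lattice points where the denominators are nonzero. -/
/-!
The solution depends on `(n, m)` only through the phase `x = pq + 2c(mp + nq)`, which is linear
in the lattice variables: the shifts in `n` and `m` add `2cq` and `2cp` to it. The lattice
equation thus becomes an identity between rational functions of the single variable `x`, which
is checked by clearing the denominators `a x`, `a (x + 2cq)`, `a (x + 2cp)`, `a (x + 2cp + 2cq)`.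
-/

section

variable {K : Type*} [Field K]

def lpmKdVPhase (p q c : K) (n m : ℤ) : K := p * q + 2 * c * ((m : K) * p + (n : K) * q)

def lpmKdVProfile (p q c a x : K) : K := -(2 * c * p * q) / (a * x) + 1

theorem lpmKdVPhase_add_one_left (p q c : K) (n m : ℤ) :
    lpmKdVPhase p q c (n + 1) m = lpmKdVPhase p q c n m + 2 * c * q := by
  unfold lpmKdVPhase
  push_cast
  ring

theorem lpmKdVPhase_add_one_right (p q c : K) (n m : ℤ) :
    lpmKdVPhase p q c n (m + 1) = lpmKdVPhase p q c n m + 2 * c * p := by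
  unfold lpmKdVPhase
  push_cast
  ring

theorem lpmKdVProfile_lpmKdV (p q c a x : K) (ha : a ≠ 0) (hx : x ≠ 0)
    (hxq : x + 2 * c * q ≠ 0) (hxp : x + 2 * c * p ≠ 0) (hxqp : x + 2 * c * q + 2 * c * p ≠ 0) :
    lpmKdVProfile p q c a x * ((p - a) * lpmKdVProfile p q c a (x + 2 * c * p)
        - (q - a) * lpmKdVProfile p q c a (x + 2 * c * q))
      = lpmKdVProfile p q c a (x + 2 * c * q + 2 * c * p)
        * ((p + a) * lpmKdVProfile p q c a (x + 2 * c * q)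
          - (q + a) * lpmKdVProfile p q c a (x + 2 * c * p)) := by
  unfold lpmKdVProfile
  field_simp
  ring

end

theorem stmt_2_general (p q c a : ℝ) (ha : a ≠ 0)
    (v : ℤ → ℤ → ℝ)
    (hv : ∀ n m : ℤ, v n m = -(2*c*p*q) / (a * (p*q + 2*c*((m : ℝ)*p + (n : ℝ)*q))) + 1)
    (n m : ℤ)
    (h1 : p*q + 2*c*((m : ℝ)*p + (n : ℝ)*q) ≠ 0)
    (h2 : p*q + 2*c*((m : ℝ)*p + ((n : ℝ)+1)*q) ≠ 0)
    (h3 : p*q + 2*c*(((m : ℝ)+1)*p + (n : ℝ)*q) ≠ 0)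
    (h4 : p*q + 2*c*(((m : ℝ)+1)*p + ((n : ℝ)+1)*q) ≠ 0) :
    v n m * ((p - a) * v n (m+1) - (q - a) * v (n+1) m)
      = v (n+1) (m+1) * ((p + a) * v (n+1) m - (q + a) * v n (m+1)) := by
  have hv_phase : ∀ n m : ℤ, v n m = lpmKdVProfile p q c a (lpmKdVPhase p q c n m) := hv
  simp only [hv_phase, lpmKdVPhase_add_one_left, lpmKdVPhase_add_one_right]
  refine lpmKdVProfile_lpmKdV p q c a _ ha h1 ?_ ?_ ?_
  · convert h2 using 1; unfold lpmKdVPhase; ring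
  · convert h3 using 1; unfold lpmKdVPhase; ring
  · convert h4 using 1; unfold lpmKdVPhase; ring

/-- The N=2 rational solution `v_a(n,m) = −2cpq/(a(pq + 2c(mp+nq))) + 1` satisfies
the lattice potential modified KdV equation
`v_a((p−a)v̂_a − (q−a)ṽ_a) = v̂̃_a((p+a)ṽ_a − (q+a)v̂_a)`. -/
theorem stmt_2 (p q c a : ℝ) (hp : p ≠ 0) (hq : q ≠ 0) (hc : c ≠ 0) (ha : a ≠ 0)
    (v : ℤ → ℤ → ℝ)
    (hv : ∀ n m : ℤ, v n m = -(2*c*p*q) / (a * (p*q + 2*c*((m : ℝ)*p + (n : ℝ)*q))) + 1)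
    (n m : ℤ)
    (h1 : p*q + 2*c*((m : ℝ)*p + (n : ℝ)*q) ≠ 0)
    (h2 : p*q + 2*c*((m : ℝ)*p + ((n : ℝ)+1)*q) ≠ 0)
    (h3 : p*q + 2*c*(((m : ℝ)+1)*p + (n : ℝ)*q) ≠ 0)
    (h4 : p*q + 2*c*(((m : ℝ)+1)*p + ((n : ℝ)+1)*q) ≠ 0) :
    v n m * ((p - a) * v n (m+1) - (q - a) * v (n+1) m)
      = v (n+1) (m+1) * ((p + a) * v (n+1) m - (q + a) * v n (m+1)) :=
  stmt_2_general p q c a ha v hv n m h1 h2 h3 h4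
end

section
/- The function S(a,b)(n,m) = 2cpq/(ab(pq + 2c(mp+nq))) satisfies the NQC equation [1+(p−a)S−(p+b)S̃]·[1−(p+a)Ŝ̃+(p−b)Ŝ] = [1+(q−a)S−(q+b)Ŝ]·[1−(q+a)Ŝ̃+(q−b)S̃], at all lattice points where denominators are nonzero. -/
/-!
Write `D = pq + 2c(mp + nq)`, so that a shift in `n` (resp. `m`) adds `2cq` (resp. `2cp`) to `D`,
and `S = k / D` with `k = 2cpq / (ab)`. Clearing the four denominators, the difference of the two
sides of the NQC equation for `S = k / D` is `4c²(q² - p²) · k(abk - 2cpq)` over their product,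
for every `k`; with `k = 2cpq / (ab)` the factor `k(abk - 2cpq)` vanishes.
-/

theorem nqc_lhs_sub_rhs (p q c a b k D : ℝ) (h₀ : D ≠ 0) (h₁ : D + 2*c*q ≠ 0)
    (h₂ : D + 2*c*p ≠ 0) (h₃ : D + 2*c*(p + q) ≠ 0) :
    (1 + (p - a) * (k / D) - (p + b) * (k / (D + 2*c*q)))
        * (1 - (p + a) * (k / (D + 2*c*(p + q))) + (p - b) * (k / (D + 2*c*p)))
      - (1 + (q - a) * (k / D) - (q + b) * (k / (D + 2*c*p)))
        * (1 - (q + a) * (k / (D + 2*c*(p + q))) + (q - b) * (k / (D + 2*c*q)))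
      = 4*c^2*(q^2 - p^2) * (k * (a*b*k - 2*c*p*q))
          / (D * (D + 2*c*q) * (D + 2*c*p) * (D + 2*c*(p + q))) := by
  -- `field_simp` only clears the shifted denominators when they are atoms.
  generalize hE₁ : D + 2*c*q = E₁ at *
  generalize hE₂ : D + 2*c*p = E₂ at *
  generalize hE₃ : D + 2*c*(p + q) = E₃ at *
  field_simp
  subst hE₁ hE₂ hE₃
  ring

-- At `y = 0` it holds because `x / 0 = 0`.
theorem div_mul_mul_div_sub_eq_zero {K : Type*} [Field K] (x y : K) :
    x / y * (y * (x / y) - x) = 0 := by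
  rcases eq_or_ne y 0 with rfl | hy
  · simp
  · rw [mul_div_cancel₀ x hy, sub_self, mul_zero]

theorem stmt_3_general (p q c a b : ℝ)
    (S : ℤ → ℤ → ℝ)
    (hS : ∀ n m : ℤ, S n m = 2*c*p*q / (a*b*(p*q + 2*c*((m : ℝ)*p + (n : ℝ)*q))))
    (n m : ℤ)
    (h1 : p*q + 2*c*((m : ℝ)*p + (n : ℝ)*q) ≠ 0)
    (h2 : p*q + 2*c*((m : ℝ)*p + ((n : ℝ)+1)*q) ≠ 0)
    (h3 : p*q + 2*c*(((m : ℝ)+1)*p + (n : ℝ)*q) ≠ 0)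
    (h4 : p*q + 2*c*(((m : ℝ)+1)*p + ((n : ℝ)+1)*q) ≠ 0) :
    (1 + (p - a) * S n m - (p + b) * S (n+1) m)
        * (1 - (p + a) * S (n+1) (m+1) + (p - b) * S n (m+1))
      = (1 + (q - a) * S n m - (q + b) * S n (m+1))
        * (1 - (q + a) * S (n+1) (m+1) + (q - b) * S (n+1) m) := by
  set D : ℝ := p*q + 2*c*((m : ℝ)*p + (n : ℝ)*q)
  set k : ℝ := 2*c*p*q / (a*b)
  have hS_shift : ∀ i j : ℤ, S (n + i) (m + j) = k / (D + 2*c*((j : ℝ)*p + (i : ℝ)*q)) := by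
    intro i j
    rw [hS, ← div_div]
    congr 1
    push_cast
    ring
  have h00 : S n m = k / D := by simpa using hS_shift 0 0
  have h10 : S (n+1) m = k / (D + 2*c*q) := by simpa using hS_shift 1 0
  have h01 : S n (m+1) = k / (D + 2*c*p) := by simpa using hS_shift 0 1
  have h11 : S (n+1) (m+1) = k / (D + 2*c*(p + q)) := by
    simpa [mul_add, add_comm] using hS_shift 1 1
  rw [← sub_eq_zero, h00, h10, h01, h11,
    nqc_lhs_sub_rhs p q c a b k D h1 (by convert h2 using 1; ring)
      (by convert h3 using 1; ring) (by convert h4 using 1; ring),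
    div_mul_mul_div_sub_eq_zero, mul_zero, zero_div]

/-- The N=2 rational solution `S(a,b)(n,m) = 2cpq/(ab(pq + 2c(mp+nq)))` satisfies
the NQC equation in cross-multiplied form. -/
theorem stmt_3 (p q c a b : ℝ) (hp : p ≠ 0) (hq : q ≠ 0) (hc : c ≠ 0)
    (ha : a ≠ 0) (hb : b ≠ 0)
    (S : ℤ → ℤ → ℝ)
    (hS : ∀ n m : ℤ, S n m = 2*c*p*q / (a*b*(p*q + 2*c*((m : ℝ)*p + (n : ℝ)*q))))
    (n m : ℤ)
    (h1 : p*q + 2*c*((m : ℝ)*p + (n : ℝ)*q) ≠ 0)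
    (h2 : p*q + 2*c*((m : ℝ)*p + ((n : ℝ)+1)*q) ≠ 0)
    (h3 : p*q + 2*c*(((m : ℝ)+1)*p + (n : ℝ)*q) ≠ 0)
    (h4 : p*q + 2*c*(((m : ℝ)+1)*p + ((n : ℝ)+1)*q) ≠ 0) :
    (1 + (p - a) * S n m - (p + b) * S (n+1) m)
        * (1 - (p + a) * S (n+1) (m+1) + (p - b) * S n (m+1))
      = (1 + (q - a) * S n m - (q + b) * S n (m+1))
        * (1 - (q + a) * S (n+1) (m+1) + (q - b) * S (n+1) m) :=
  stmt_3_general p q c a b S hS n m h1 h2 h3 h4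
end

section
/- With w = 2cpq/(pq+2c(mp+nq)) + 2c and v_a = −2cpq/(a(pq+2c(mp+nq))) + 1, the Miura relation (p−q+ŵ−w̃)·v̂̃_a = (p−a)v̂_a − (q−a)ṽ_a holds at all lattice points where denominators are nonzero. -/
/-!
Write `τ(n, m) = pq + 2c(mp + nq)` and `u = 2cpq / τ`, so that `w = u + 2c` and `v_a = 1 - u / a`.
Since `τ` is affine in `n` and `m`, one has `τ̂̃ = τ̂ + 2cq = τ̃ + 2cp`, and clearing denominators
turns this into the relation `(p - q + û - ũ) û̃ = p û - q ũ`. The Miura relation is linear in `u`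
once this relation is used to eliminate the product `(û - ũ) û̃`.
-/

theorem lpkdv_rational_relation {K : Type*} [Field K] {p q c τ₁₀ τ₀₁ τ₁₁ : K}
    (h₁₀ : τ₁₀ ≠ 0) (h₀₁ : τ₀₁ ≠ 0) (h₁₁ : τ₁₁ ≠ 0)
    (hq : τ₁₁ = τ₁₀ + 2 * c * q) (hp : τ₁₁ = τ₀₁ + 2 * c * p) :
    (p - q + 2 * c * p * q / τ₁₀ - 2 * c * p * q / τ₀₁) * (2 * c * p * q / τ₁₁)
      = p * (2 * c * p * q / τ₁₀) - q * (2 * c * p * q / τ₀₁) := by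
  field_simp
  subst hq
  linear_combination 2 * p * q ^ 2 * c * τ₁₀ * hp

theorem miura_of_lpkdv_relation {K : Type*} [Field K] {p q a k u₁₀ u₀₁ u₁₁ : K} (ha : a ≠ 0)
    (h : (p - q + u₁₀ - u₀₁) * u₁₁ = p * u₁₀ - q * u₀₁) :
    (p - q + (u₁₀ + k) - (u₀₁ + k)) * (-u₁₁ / a + 1)
      = (p - a) * (-u₁₀ / a + 1) - (q - a) * (-u₀₁ / a + 1) := by
  field_simp
  linear_combination -h

theorem stmt_5_general (p q c a : ℝ) (ha : a ≠ 0)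
    (w v : ℤ → ℤ → ℝ)
    (hw : ∀ n m : ℤ, w n m = 2*c*p*q / (p*q + 2*c*((m : ℝ)*p + (n : ℝ)*q)) + 2*c)
    (hv : ∀ n m : ℤ, v n m = -(2*c*p*q) / (a * (p*q + 2*c*((m : ℝ)*p + (n : ℝ)*q))) + 1)
    (n m : ℤ)
    (h2 : p*q + 2*c*((m : ℝ)*p + ((n : ℝ)+1)*q) ≠ 0)
    (h3 : p*q + 2*c*(((m : ℝ)+1)*p + (n : ℝ)*q) ≠ 0)
    (h4 : p*q + 2*c*(((m : ℝ)+1)*p + ((n : ℝ)+1)*q) ≠ 0) :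
    (p - q + w n (m+1) - w (n+1) m) * v (n+1) (m+1)
      = (p - a) * v n (m+1) - (q - a) * v (n+1) m := by
  set u : ℤ → ℤ → ℝ := fun n m ↦ 2*c*p*q / (p*q + 2*c*((m : ℝ)*p + (n : ℝ)*q))
  have hv' : ∀ n m, v n m = -u n m / a + 1 := fun n m ↦ by
    rw [hv, neg_div, neg_div, div_div, mul_comm a]
  have hu : (p - q + u n (m+1) - u (n+1) m) * u (n+1) (m+1) = p * u n (m+1) - q * u (n+1) m := by
    simp only [u, Int.cast_add, Int.cast_one]
    exact lpkdv_rational_relation h3 h2 h4 (by ring) (by ring)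
  rw [hw, hw, hv', hv', hv']
  exact miura_of_lpkdv_relation ha hu

/-- Miura relation `(p−q+ŵ−w̃)·v̂̃_a = (p−a)v̂_a − (q−a)ṽ_a` between the N=2
rational lpKdV and lpmKdV solutions. -/
theorem stmt_5 (p q c a : ℝ) (hp : p ≠ 0) (hq : q ≠ 0) (hc : c ≠ 0) (ha : a ≠ 0)
    (w v : ℤ → ℤ → ℝ)
    (hw : ∀ n m : ℤ, w n m = 2*c*p*q / (p*q + 2*c*((m : ℝ)*p + (n : ℝ)*q)) + 2*c)
    (hv : ∀ n m : ℤ, v n m = -(2*c*p*q) / (a * (p*q + 2*c*((m : ℝ)*p + (n : ℝ)*q))) + 1)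
    (n m : ℤ)
    (h1 : p*q + 2*c*((m : ℝ)*p + (n : ℝ)*q) ≠ 0)
    (h2 : p*q + 2*c*((m : ℝ)*p + ((n : ℝ)+1)*q) ≠ 0)
    (h3 : p*q + 2*c*(((m : ℝ)+1)*p + (n : ℝ)*q) ≠ 0)
    (h4 : p*q + 2*c*(((m : ℝ)+1)*p + ((n : ℝ)+1)*q) ≠ 0) :
    (p - q + w n (m+1) - w (n+1) m) * v (n+1) (m+1)
      = (p - a) * v n (m+1) - (q - a) * v (n+1) m :=
  stmt_5_general p q c a ha w v hw hv n m h2 h3 h4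
end

section
/- With w = 2cpq/(pq+2c(mp+nq)) + 2c and v_a = −2cpq/(a(pq+2c(mp+nq))) + 1, the Miura relation (p+q+w−ŵ̃)·ṽ_a = (p−a)v_a + (q+a)v̂̃_a holds at all lattice points where denominators are nonzero. -/
/-- `x`, `y`, `z` stand for the denominator `pq + 2c(mp + nq)` at `(n, m)`, `(n + 1, m)` and
`(n + 1, m + 1)`. -/
theorem miura_relation_rational (p q c a x y z : ℝ) (ha : a ≠ 0) (hx : x ≠ 0) (hy : y ≠ 0)
    (hz : z ≠ 0) (hy_eq : y = x + 2*c*q) (hz_eq : z = x + 2*c*(p + q)) :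
    (p + q + (2*c*p*q / x + 2*c) - (2*c*p*q / z + 2*c)) * (-(2*c*p*q) / (a * y) + 1)
      = (p - a) * (-(2*c*p*q) / (a * x) + 1) + (q + a) * (-(2*c*p*q) / (a * z) + 1) := by
  field_simp
  subst hy_eq hz_eq
  ring

theorem stmt_6_general (p q c a : ℝ) (ha : a ≠ 0)
    (w v : ℤ → ℤ → ℝ)
    (hw : ∀ n m : ℤ, w n m = 2*c*p*q / (p*q + 2*c*((m : ℝ)*p + (n : ℝ)*q)) + 2*c)
    (hv : ∀ n m : ℤ, v n m = -(2*c*p*q) / (a * (p*q + 2*c*((m : ℝ)*p + (n : ℝ)*q))) + 1)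
    (n m : ℤ)
    (h1 : p*q + 2*c*((m : ℝ)*p + (n : ℝ)*q) ≠ 0)
    (h2 : p*q + 2*c*((m : ℝ)*p + ((n : ℝ)+1)*q) ≠ 0)
    (h4 : p*q + 2*c*(((m : ℝ)+1)*p + ((n : ℝ)+1)*q) ≠ 0) :
    (p + q + w n m - w (n+1) (m+1)) * v (n+1) m
      = (p - a) * v n m + (q + a) * v (n+1) (m+1) := by
  simp only [hw, hv, Int.cast_add, Int.cast_one]
  exact miura_relation_rational p q c a _ _ _ ha h1 h2 h4 (by ring) (by ring)

/-- Miura relation `(p+q+w−ŵ̃)·ṽ_a = (p−a)v_a + (q+a)v̂̃_a` between the N=2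
rational lpKdV and lpmKdV solutions. -/
theorem stmt_6 (p q c a : ℝ) (hp : p ≠ 0) (hq : q ≠ 0) (hc : c ≠ 0) (ha : a ≠ 0)
    (w v : ℤ → ℤ → ℝ)
    (hw : ∀ n m : ℤ, w n m = 2*c*p*q / (p*q + 2*c*((m : ℝ)*p + (n : ℝ)*q)) + 2*c)
    (hv : ∀ n m : ℤ, v n m = -(2*c*p*q) / (a * (p*q + 2*c*((m : ℝ)*p + (n : ℝ)*q))) + 1)
    (n m : ℤ)
    (h1 : p*q + 2*c*((m : ℝ)*p + (n : ℝ)*q) ≠ 0)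
    (h2 : p*q + 2*c*((m : ℝ)*p + ((n : ℝ)+1)*q) ≠ 0)
    (h3 : p*q + 2*c*(((m : ℝ)+1)*p + (n : ℝ)*q) ≠ 0)
    (h4 : p*q + 2*c*(((m : ℝ)+1)*p + ((n : ℝ)+1)*q) ≠ 0) :
    (p + q + w n m - w (n+1) (m+1)) * v (n+1) m
      = (p - a) * v n m + (q + a) * v (n+1) (m+1) :=
  stmt_6_general p q c a ha w v hw hv n m h1 h2 h4
end

section
/- With v_a = −2cpq/(a·D) + 1, v_b = −2cpq/(b·D) + 1, and S(a,b) = 2cpq/(ab·D), where D = pq+2c(mp+nq), the relation 1 + (p−a)S(a,b) − (p+b)S̃(a,b) = ṽ_a·v_b holds at all lattice points where D and its shift are nonzero. -/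
/-! Writing `K = 2cpq`, all four quantities are rational in `D` and `D̃`, and the relation
holds as soon as the shift satisfies `p (D̃ - D) = K`: after clearing the denominators `abDD̃`
the two sides differ by `pK(D̃ - D) - K²`. -/

theorem miura_relation_of_mul_sub_eq {K p a b D D' : ℝ} (ha : a ≠ 0) (hb : b ≠ 0)
    (hD : D ≠ 0) (hD' : D' ≠ 0) (hshift : p * (D' - D) = K) :
    1 + (p - a) * (K / (a * b * D)) - (p + b) * (K / (a * b * D')) =
      (-K / (a * D') + 1) * (-K / (b * D) + 1) := by
  subst hshift
  field_simp
  ring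

theorem stmt_7_general (p q c a b : ℝ)
    (ha : a ≠ 0) (hb : b ≠ 0)
    (D : ℤ → ℤ → ℝ)
    (hD : ∀ n m : ℤ, D n m = p*q + 2*c*((m : ℝ)*p + (n : ℝ)*q))
    (va vb S : ℤ → ℤ → ℝ)
    (hva : ∀ n m : ℤ, va n m = -(2*c*p*q) / (a * D n m) + 1)
    (hvb : ∀ n m : ℤ, vb n m = -(2*c*p*q) / (b * D n m) + 1)
    (hS : ∀ n m : ℤ, S n m = 2*c*p*q / (a*b*D n m))
    (n m : ℤ) (h1 : D n m ≠ 0) (h2 : D (n+1) m ≠ 0) :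
    1 + (p - a) * S n m - (p + b) * S (n+1) m = va (n+1) m * vb n m := by
  have hshift : p * (D (n+1) m - D n m) = 2*c*p*q := by
    rw [hD, hD]
    push_cast
    ring
  rw [hS, hS, hva, hvb]
  exact miura_relation_of_mul_sub_eq ha hb h1 h2 hshift

/-- Miura-type relation `1 + (p−a)S(a,b) − (p+b)S̃(a,b) = ṽ_a·v_b` for the N=2
rational solutions, where `D = pq + 2c(mp+nq)`. -/
theorem stmt_7 (p q c a b : ℝ) (hp : p ≠ 0) (hq : q ≠ 0) (hc : c ≠ 0)
    (ha : a ≠ 0) (hb : b ≠ 0)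
    (D : ℤ → ℤ → ℝ)
    (hD : ∀ n m : ℤ, D n m = p*q + 2*c*((m : ℝ)*p + (n : ℝ)*q))
    (va vb S : ℤ → ℤ → ℝ)
    (hva : ∀ n m : ℤ, va n m = -(2*c*p*q) / (a * D n m) + 1)
    (hvb : ∀ n m : ℤ, vb n m = -(2*c*p*q) / (b * D n m) + 1)
    (hS : ∀ n m : ℤ, S n m = 2*c*p*q / (a*b*D n m))
    (n m : ℤ) (h1 : D n m ≠ 0) (h2 : D (n+1) m ≠ 0) :
    1 + (p - a) * S n m - (p + b) * S (n+1) m = va (n+1) m * vb n m :=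
  stmt_7_general p q c a b ha hb D hD va vb S hva hvb hS n m h1 h2
end

section
/- With v_a = −2cpq/(a·D) + 1, v_b = −2cpq/(b·D) + 1, and S(a,b) = 2cpq/(ab·D), where D = pq+2c(mp+nq), the relation 1 + (q−a)S(a,b) − (q+b)Ŝ(a,b) = v̂_a·v_b holds at all lattice points where D and its m-shift are nonzero. -/
/-- Miura-type relation `1 + (q−a)S(a,b) − (q+b)Ŝ(a,b) = v̂_a·v_b` for the N=2
rational solutions, where `D = pq + 2c(mp+nq)`. -/
theorem stmt_8 (p q c a b : ℝ) (hp : p ≠ 0) (hq : q ≠ 0) (hc : c ≠ 0)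
    (ha : a ≠ 0) (hb : b ≠ 0)
    (D : ℤ → ℤ → ℝ)
    (hD : ∀ n m : ℤ, D n m = p*q + 2*c*((m : ℝ)*p + (n : ℝ)*q))
    (va vb S : ℤ → ℤ → ℝ)
    (hva : ∀ n m : ℤ, va n m = -(2*c*p*q) / (a * D n m) + 1)
    (hvb : ∀ n m : ℤ, vb n m = -(2*c*p*q) / (b * D n m) + 1)
    (hS : ∀ n m : ℤ, S n m = 2*c*p*q / (a*b*D n m))
    (n m : ℤ) (h1 : D n m ≠ 0) (h2 : D n (m+1) ≠ 0) :
    1 + (q - a) * S n m - (q + b) * S n (m+1) = va n (m+1) * vb n m := by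
  have e1 : D n m = p*q + 2*c*((m : ℝ)*p + (n : ℝ)*q) := hD n m
  have e2 : D n (m+1) = p*q + 2*c*(((m : ℝ)+1)*p + (n : ℝ)*q) := by
    rw [hD]; push_cast; ring
  rw [hva, hvb, hS, hS, e1, e2]
  rw [e1] at h1; rw [e2] at h2
  have h1' : q * p + 2 * c * (p * (m : ℝ) + q * (n : ℝ)) ≠ 0 := by convert h1 using 1; ring
  have h2' : q * p + 2 * c * (p * ((m : ℝ) + 1) + q * (n : ℝ)) ≠ 0 := by convert h2 using 1; ring
  field_simp
  ring
end

section
/- The degree-three rational function w given by w = 6cpq·D²/E + 3c, where D = pq+2c(mp+nq) and E = −3pq((pq)² − 2cpq(mp+nq) − 4c²(mp+nq)²) + 8c³(3nm·pq(mp+nq) + (n³−n)q³ + (m³−m)p³), satisfies the lattice potential KdV equation (p−q+ŵ−w̃)(p+q+w−ŵ̃) = p²−q² at all lattice points where E and its shifts are nonzero. -/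
/-!
The solution has the form `w = 3c + 6cpq D²/E` with `E` the τ-function of the Casoratian
construction. Over a common denominator, each factor of the lattice potential KdV equation
collapses by a bilinear (Hirota-type) identity for `D` and `E`:
`p − q + ŵ − w̃ = (p − q) E Ễ / (Ẽ Ê)` and `p + q + w − Ễ = (p + q) Ẽ Ê / (E Ễ)`,
so the product of the two factors is `p² − q²`.
-/

namespace RationalLpKdV

section CommRing

variable {R : Type*} [CommRing R] (p q c : R)

def D (n m : R) : R := p*q + 2*c*(m*p + n*q)

def E (n m : R) : R :=
  -(3*p*q*((p*q)^2 - 2*c*p*q*(m*p + n*q) - 4*c^2*(m*p + n*q)^2))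
    + 8*c^3*(3*n*m*p*q*(m*p + n*q) + (n^3 - n)*q^3 + (m^3 - m)*p^3)

theorem E_bilinear_sub (n m : R) :
    (p - q) * (E p q c (n+1) m * E p q c n (m+1))
      + 6*c*p*q*(D p q c n (m+1)^2 * E p q c (n+1) m - D p q c (n+1) m^2 * E p q c n (m+1))
      = (p - q) * (E p q c n m * E p q c (n+1) (m+1)) := by
  unfold D E; ring

theorem E_bilinear_add (n m : R) :
    (p + q) * (E p q c n m * E p q c (n+1) (m+1))
      + 6*c*p*q*(D p q c n m^2 * E p q c (n+1) (m+1) - D p q c (n+1) (m+1)^2 * E p q c n m)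
      = (p + q) * (E p q c (n+1) m * E p q c n (m+1)) := by
  unfold D E; ring

end CommRing

section Field

variable {K : Type*} [Field K] (p q c : K)

def w (n m : K) : K := 6*c*p*q*(D p q c n m)^2 / E p q c n m + 3*c

theorem sub_add_w_sub_w_eq {n m : K} (h₁ : E p q c (n+1) m ≠ 0) (h₂ : E p q c n (m+1) ≠ 0) :
    p - q + w p q c n (m+1) - w p q c (n+1) m
      = (p - q) * (E p q c n m * E p q c (n+1) (m+1)) / (E p q c (n+1) m * E p q c n (m+1)) := by
  rw [eq_div_iff (mul_ne_zero h₁ h₂), ← E_bilinear_sub]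
  unfold w
  field_simp
  ring

theorem add_add_w_sub_w_eq {n m : K} (h₁ : E p q c n m ≠ 0) (h₂ : E p q c (n+1) (m+1) ≠ 0) :
    p + q + w p q c n m - w p q c (n+1) (m+1)
      = (p + q) * (E p q c (n+1) m * E p q c n (m+1)) / (E p q c n m * E p q c (n+1) (m+1)) := by
  rw [eq_div_iff (mul_ne_zero h₁ h₂), ← E_bilinear_add]
  unfold w
  field_simp
  ring

end Field

end RationalLpKdV

theorem stmt_9_general (p q c : ℝ)
    (D E w : ℤ → ℤ → ℝ)
    (hD : ∀ n m : ℤ, D n m = p*q + 2*c*((m : ℝ)*p + (n : ℝ)*q))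
    (hE : ∀ n m : ℤ, E n m =
      -(3*p*q*((p*q)^2 - 2*c*p*q*((m : ℝ)*p + (n : ℝ)*q)
        - 4*c^2*((m : ℝ)*p + (n : ℝ)*q)^2))
      + 8*c^3*(3*(n : ℝ)*(m : ℝ)*p*q*((m : ℝ)*p + (n : ℝ)*q)
        + ((n : ℝ)^3 - (n : ℝ))*q^3 + ((m : ℝ)^3 - (m : ℝ))*p^3))
    (hw : ∀ n m : ℤ, w n m = 6*c*p*q*(D n m)^2 / E n m + 3*c)
    (n m : ℤ)
    (h1 : E n m ≠ 0) (h2 : E (n+1) m ≠ 0) (h3 : E n (m+1) ≠ 0) (h4 : E (n+1) (m+1) ≠ 0) :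
    (p - q + w n (m+1) - w (n+1) m) * (p + q + w n m - w (n+1) (m+1)) = p^2 - q^2 := by
  have hE' : ∀ n m : ℤ, E n m = RationalLpKdV.E p q c n m := hE
  have hw' : ∀ n m : ℤ, w n m = RationalLpKdV.w p q c n m := fun n m => by
    rw [hw, hD, hE]; rfl
  simp only [hw', hE', Int.cast_add, Int.cast_one] at h1 h2 h3 h4 ⊢
  rw [RationalLpKdV.sub_add_w_sub_w_eq p q c h2 h3, RationalLpKdV.add_add_w_sub_w_eq p q c h1 h4]
  field_simp
  ring

/-- The N=3 rational solution `w = 6cpq·D²/E + 3c` satisfies the lattice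
potential KdV equation `(p−q+ŵ−w̃)(p+q+w−ŵ̃) = p²−q²`. -/
theorem stmt_9 (p q c : ℝ) (hp : p ≠ 0) (hq : q ≠ 0) (hc : c ≠ 0)
    (D E w : ℤ → ℤ → ℝ)
    (hD : ∀ n m : ℤ, D n m = p*q + 2*c*((m : ℝ)*p + (n : ℝ)*q))
    (hE : ∀ n m : ℤ, E n m =
      -(3*p*q*((p*q)^2 - 2*c*p*q*((m : ℝ)*p + (n : ℝ)*q)
        - 4*c^2*((m : ℝ)*p + (n : ℝ)*q)^2))
      + 8*c^3*(3*(n : ℝ)*(m : ℝ)*p*q*((m : ℝ)*p + (n : ℝ)*q)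
        + ((n : ℝ)^3 - (n : ℝ))*q^3 + ((m : ℝ)^3 - (m : ℝ))*p^3))
    (hw : ∀ n m : ℤ, w n m = 6*c*p*q*(D n m)^2 / E n m + 3*c)
    (n m : ℤ)
    (h1 : E n m ≠ 0) (h2 : E (n+1) m ≠ 0) (h3 : E n (m+1) ≠ 0) (h4 : E (n+1) (m+1) ≠ 0) :
    (p - q + w n (m+1) - w (n+1) m) * (p + q + w n m - w (n+1) (m+1)) = p^2 - q^2 :=
  stmt_9_general p q c D E w hD hE hw n m h1 h2 h3 h4
end

section
/- The function S(a,b) = (6cpq/(a²b²))·(−2cpq + a·D)·(−2cpq + b·D)/E, with D = pq+2c(mp+nq) and E = −3pq((pq)² − 2cpq(mp+nq) − 4c²(mp+nq)²) + 8c³(3nm·pq(mp+nq) + (n³−n)q³ + (m³−m)p³), is symmetric: S(a,b) = S(b,a), and remains well defined for b = −a. -/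
theorem stmt_10_general (p q c : ℝ)
    (D E : ℤ → ℤ → ℝ)
    (S : ℝ → ℝ → ℤ → ℤ → ℝ)
    (hS : ∀ (a b : ℝ) (n m : ℤ),
      S a b n m = (6*c*p*q/(a^2*b^2)) * (-(2*c*p*q) + a * D n m)
        * (-(2*c*p*q) + b * D n m) / E n m)
    (a b : ℝ) (ha : a ≠ 0) (n m : ℤ) (hEnm : E n m ≠ 0) :
    S a b n m = S b a n m ∧ a^2 * (-a)^2 * E n m ≠ 0 := by
  refine ⟨by rw [hS, hS]; ring, by simp [ha, hEnm]⟩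

/-- The N=3 rational NQC solution
`S(a,b) = (6cpq/(a²b²))·(−2cpq + aD)(−2cpq + bD)/E` is symmetric in `a,b`,
and remains well defined for `b = −a` (its denominator `a²b²E` stays nonzero). -/
theorem stmt_10 (p q c : ℝ) (hp : p ≠ 0) (hq : q ≠ 0) (hc : c ≠ 0)
    (D E : ℤ → ℤ → ℝ)
    (hD : ∀ n m : ℤ, D n m = p*q + 2*c*((m : ℝ)*p + (n : ℝ)*q))
    (hE : ∀ n m : ℤ, E n m =
      -(3*p*q*((p*q)^2 - 2*c*p*q*((m : ℝ)*p + (n : ℝ)*q)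
        - 4*c^2*((m : ℝ)*p + (n : ℝ)*q)^2))
      + 8*c^3*(3*(n : ℝ)*(m : ℝ)*p*q*((m : ℝ)*p + (n : ℝ)*q)
        + ((n : ℝ)^3 - (n : ℝ))*q^3 + ((m : ℝ)^3 - (m : ℝ))*p^3))
    (S : ℝ → ℝ → ℤ → ℤ → ℝ)
    (hS : ∀ (a b : ℝ) (n m : ℤ),
      S a b n m = (6*c*p*q/(a^2*b^2)) * (-(2*c*p*q) + a * D n m)
        * (-(2*c*p*q) + b * D n m) / E n m)
    (a b : ℝ) (ha : a ≠ 0) (hb : b ≠ 0) (n m : ℤ) (hEnm : E n m ≠ 0) :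
    S a b n m = S b a n m ∧ a^2 * (-a)^2 * E n m ≠ 0 :=
  stmt_10_general p q c D E S hS a b ha n m hEnm
end

section
/- The function u(n,m) = (1/4)(ζ+ζ₀)² − (ζ+ζ₀)S⁽⁰⁾ + 2S⁽¹⁾ − A² + (−1)^{n+m}A(ζ+ζ₁/2−2S⁽⁰⁾), with ζ = 2(np+mq), S⁽⁰⁾ = 2cpq/(pq+2c(mp+nq)), S⁽¹⁾ = 0, satisfies the H2 lattice equation (u−û̃)(ũ−û) + (p²−q²)(u+ũ+û+û̃) = p⁴−q⁴ at all lattice points where the denominator pq+2c(mp+nq) and its shifts are nonzero. -/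
/-!
A step in `n` (resp. `m`) flips the sign `(-1)^(n+m)`, adds `2p` (resp. `2q`) to `ζ` and `2cq`
(resp. `2cp`) to the denominator of `S⁽⁰⁾`. Once the sign is treated as a parameter `σ = ±1`,
the H2 equation on an elementary quadrilateral becomes an identity of rational functions in `ζ`
and that denominator, checked by clearing the four denominators.
-/

/-- `u₁₀ = ũ`, `u₀₁ = û`, `u₁₁ = û̃`. -/
def h2Lhs (p q u u₁₀ u₀₁ u₁₁ : ℝ) : ℝ :=
  (u - u₁₁) * (u₁₀ - u₀₁) + (p^2 - q^2) * (u + u₁₀ + u₀₁ + u₁₁)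

/-- The solution with `(n, m)` read as reals `(x, y)` and the sign `(-1)^(n+m)` as a free `σ`. -/
noncomputable def h2N2Solution (p q c A ζ₀ ζ₁ σ x y : ℝ) : ℝ :=
  let ζ := 2*(x*p + y*q)
  let S₀ := 2*c*p*q / (p*q + 2*c*(y*p + x*q))
  (1/4)*(ζ + ζ₀)^2 - (ζ + ζ₀)*S₀ - A^2 + σ*A*(ζ + ζ₁/2 - 2*S₀)

theorem h2Lhs_h2N2Solution (p q c A ζ₀ ζ₁ σ x y : ℝ) (hσ : σ = 1 ∨ σ = -1)
    (h₀₀ : p*q + 2*c*(y*p + x*q) ≠ 0)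
    (h₁₀ : p*q + 2*c*(y*p + (x+1)*q) ≠ 0)
    (h₀₁ : p*q + 2*c*((y+1)*p + x*q) ≠ 0)
    (h₁₁ : p*q + 2*c*((y+1)*p + (x+1)*q) ≠ 0) :
    h2Lhs p q (h2N2Solution p q c A ζ₀ ζ₁ σ x y) (h2N2Solution p q c A ζ₀ ζ₁ (-σ) (x+1) y)
      (h2N2Solution p q c A ζ₀ ζ₁ (-σ) x (y+1)) (h2N2Solution p q c A ζ₀ ζ₁ σ (x+1) (y+1))
      = p^4 - q^4 := by
  have ζ₁₀ : 2*((x+1)*p + y*q) = 2*(x*p + y*q) + 2*p := by ring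
  have ζ₀₁ : 2*(x*p + (y+1)*q) = 2*(x*p + y*q) + 2*q := by ring
  have ζ₁₁ : 2*((x+1)*p + (y+1)*q) = 2*(x*p + y*q) + 2*p + 2*q := by ring
  have d₁₀ : p*q + 2*c*(y*p + (x+1)*q) = p*q + 2*c*(y*p + x*q) + 2*c*q := by ring
  have d₀₁ : p*q + 2*c*((y+1)*p + x*q) = p*q + 2*c*(y*p + x*q) + 2*c*p := by ring
  have d₁₁ : p*q + 2*c*((y+1)*p + (x+1)*q) = p*q + 2*c*(y*p + x*q) + 2*c*p + 2*c*q := by ring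
  simp only [h2Lhs, h2N2Solution, ζ₁₀, ζ₀₁, ζ₁₁, d₁₀, d₀₁, d₁₁] at h₁₀ h₀₁ h₁₁ ⊢
  generalize 2*(x*p + y*q) = ζ
  generalize p*q + 2*c*(y*p + x*q) = d at *
  rcases hσ with rfl | rfl <;>
  · field_simp
    ring

theorem neg_one_zpow_eq_one_or {α : Type*} [DivisionRing α] (k : ℤ) :
    (-1 : α)^k = 1 ∨ (-1 : α)^k = -1 := by
  rw [neg_one_zpow_eq_ite]
  split_ifs <;> simp

theorem neg_one_zpow_add_one {α : Type*} [DivisionRing α] (k : ℤ) :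
    (-1 : α)^(k + 1) = -(-1 : α)^k := by
  rw [zpow_add_one₀ (by norm_num), mul_neg_one]

theorem stmt_12_general (p q c A ζ₀ ζ₁ : ℝ)
    (ζ S₀ S₁ u : ℤ → ℤ → ℝ)
    (hζ : ∀ n m : ℤ, ζ n m = 2*((n : ℝ)*p + (m : ℝ)*q))
    (hS₀ : ∀ n m : ℤ, S₀ n m = 2*c*p*q / (p*q + 2*c*((m : ℝ)*p + (n : ℝ)*q)))
    (hS₁ : ∀ n m : ℤ, S₁ n m = 0)
    (hu : ∀ n m : ℤ, u n m = (1/4)*(ζ n m + ζ₀)^2 - (ζ n m + ζ₀)*S₀ n m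
      + 2*S₁ n m - A^2 + (-1 : ℝ)^(n+m) * A * (ζ n m + ζ₁/2 - 2*S₀ n m))
    (n m : ℤ)
    (h1 : p*q + 2*c*((m : ℝ)*p + (n : ℝ)*q) ≠ 0)
    (h2 : p*q + 2*c*((m : ℝ)*p + ((n : ℝ)+1)*q) ≠ 0)
    (h3 : p*q + 2*c*(((m : ℝ)+1)*p + (n : ℝ)*q) ≠ 0)
    (h4 : p*q + 2*c*(((m : ℝ)+1)*p + ((n : ℝ)+1)*q) ≠ 0) :
    (u n m - u (n+1) (m+1)) * (u (n+1) m - u n (m+1))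
      + (p^2 - q^2) * (u n m + u (n+1) m + u n (m+1) + u (n+1) (m+1))
      = p^4 - q^4 := by
  have site (k l : ℤ) : u k l = h2N2Solution p q c A ζ₀ ζ₁ ((-1 : ℝ)^(k+l)) k l := by
    rw [hu, hζ, hS₀, hS₁, h2N2Solution]
    ring
  have sign₁₀ : (-1 : ℝ)^(n+1+m) = -(-1 : ℝ)^(n+m) := by
    rw [add_right_comm, neg_one_zpow_add_one]
  have sign₀₁ : (-1 : ℝ)^(n+(m+1)) = -(-1 : ℝ)^(n+m) := by
    rw [← add_assoc, neg_one_zpow_add_one]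
  have sign₁₁ : (-1 : ℝ)^(n+1+(m+1)) = (-1 : ℝ)^(n+m) := by
    rw [← add_assoc, add_right_comm n, neg_one_zpow_add_one, neg_one_zpow_add_one, neg_neg]
  rw [site n m, site (n+1) m, site n (m+1), site (n+1) (m+1), sign₁₀, sign₀₁, sign₁₁]
  push_cast
  exact h2Lhs_h2N2Solution p q c A ζ₀ ζ₁ _ n m (neg_one_zpow_eq_one_or _) h1 h2 h3 h4

/-- The N=2 rational solution
`u = (1/4)(ζ+ζ₀)² − (ζ+ζ₀)S⁽⁰⁾ + 2S⁽¹⁾ − A² + (−1)^{n+m}A(ζ+ζ₁/2−2S⁽⁰⁾)` with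
`S⁽¹⁾ = 0` satisfies the re-parameterized H2 equation
`(u−û̃)(ũ−û) + (p²−q²)(u+ũ+û+û̃) = p⁴−q⁴`. -/
theorem stmt_12 (p q c A ζ₀ ζ₁ : ℝ) (hp : p ≠ 0) (hq : q ≠ 0) (hc : c ≠ 0)
    (ζ S₀ S₁ u : ℤ → ℤ → ℝ)
    (hζ : ∀ n m : ℤ, ζ n m = 2*((n : ℝ)*p + (m : ℝ)*q))
    (hS₀ : ∀ n m : ℤ, S₀ n m = 2*c*p*q / (p*q + 2*c*((m : ℝ)*p + (n : ℝ)*q)))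
    (hS₁ : ∀ n m : ℤ, S₁ n m = 0)
    (hu : ∀ n m : ℤ, u n m = (1/4)*(ζ n m + ζ₀)^2 - (ζ n m + ζ₀)*S₀ n m
      + 2*S₁ n m - A^2 + (-1 : ℝ)^(n+m) * A * (ζ n m + ζ₁/2 - 2*S₀ n m))
    (n m : ℤ)
    (h1 : p*q + 2*c*((m : ℝ)*p + (n : ℝ)*q) ≠ 0)
    (h2 : p*q + 2*c*((m : ℝ)*p + ((n : ℝ)+1)*q) ≠ 0)
    (h3 : p*q + 2*c*(((m : ℝ)+1)*p + (n : ℝ)*q) ≠ 0)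
    (h4 : p*q + 2*c*(((m : ℝ)+1)*p + ((n : ℝ)+1)*q) ≠ 0) :
    (u n m - u (n+1) (m+1)) * (u (n+1) m - u n (m+1))
      + (p^2 - q^2) * (u n m + u (n+1) m + u n (m+1) + u (n+1) (m+1))
      = p^4 - q^4 :=
  stmt_12_general p q c A ζ₀ ζ₁ ζ S₀ S₁ u hζ hS₀ hS₁ hu n m h1 h2 h3 h4
end

section
/- If functions f, g, h on the lattice satisfy the three bilinear equations (p−a)f̂̃h + (q+a)f·ĥ̃ − (p+q)f̂·h̃ = 0, (p+a)f·ĥ̃ + (q−a)f̂̃h − (p+q)f̃·ĥ = 0, and (p−a)f̃ĥ − (q−a)f̂h̃ − (p−q)f·ĥ̃ = 0, then they also satisfy (p+a)f̂h̃ − (q+a)f̃ĥ − (p−q)f̂̃h = 0, wherever the relevant quantities are nonzero (assuming f, h nonvanishing). -/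
theorem lpmKdV_bilinear_of_two {R : Type*} [CommRing R] [IsDomain R]
    {p q a f₀₀ f₁₀ f₀₁ f₁₁ h₀₀ h₁₀ h₀₁ h₁₁ : R} (hpq : p + q ≠ 0)
    (H₁ : (p - a) * f₁₁ * h₀₀ + (q + a) * f₀₀ * h₁₁ - (p + q) * f₀₁ * h₁₀ = 0)
    (H₂ : (p + a) * f₀₀ * h₁₁ + (q - a) * f₁₁ * h₀₀ - (p + q) * f₁₀ * h₀₁ = 0) :
    (p + a) * f₀₁ * h₁₀ - (q + a) * f₁₀ * h₀₁ - (p - q) * f₁₁ * h₀₀ = 0 := by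
  apply mul_left_cancel₀ hpq
  linear_combination (q + a) * H₂ - (p + a) * H₁

theorem stmt_14_general (p q a : ℝ) (hpq : p + q ≠ 0)
    (f h : ℤ → ℤ → ℝ)
    (H11 : ∀ n m : ℤ, (p - a) * f (n+1) (m+1) * h n m
      + (q + a) * f n m * h (n+1) (m+1) - (p + q) * f n (m+1) * h (n+1) m = 0)
    (H12 : ∀ n m : ℤ, (p + a) * f n m * h (n+1) (m+1)
      + (q - a) * f (n+1) (m+1) * h n m - (p + q) * f (n+1) m * h n (m+1) = 0) :
    ∀ n m : ℤ, (p + a) * f n (m+1) * h (n+1) m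
      - (q + a) * f (n+1) m * h n (m+1) - (p - q) * f (n+1) (m+1) * h n m = 0 :=
  fun n m => lpmKdV_bilinear_of_two hpq (H11 n m) (H12 n m)

/-- Among the four bilinear forms of the lpmKdV equation, any three imply the
fourth: if `f, h` (nowhere zero) satisfy
`(p−a)f̂̃h + (q+a)f·ĥ̃ − (p+q)f̂·h̃ = 0`,
`(p+a)f·ĥ̃ + (q−a)f̂̃h − (p+q)f̃·ĥ = 0`, and
`(p−a)f̃ĥ − (q−a)f̂h̃ − (p−q)f·ĥ̃ = 0`,
then `(p+a)f̂h̃ − (q+a)f̃ĥ − (p−q)f̂̃h = 0`. -/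
theorem stmt_14 (p q a : ℝ) (hpq : p + q ≠ 0) (hpq' : p - q ≠ 0)
    (f h : ℤ → ℤ → ℝ)
    (hf : ∀ n m : ℤ, f n m ≠ 0) (hh : ∀ n m : ℤ, h n m ≠ 0)
    (H11 : ∀ n m : ℤ, (p - a) * f (n+1) (m+1) * h n m
      + (q + a) * f n m * h (n+1) (m+1) - (p + q) * f n (m+1) * h (n+1) m = 0)
    (H12 : ∀ n m : ℤ, (p + a) * f n m * h (n+1) (m+1)
      + (q - a) * f (n+1) (m+1) * h n m - (p + q) * f (n+1) m * h n (m+1) = 0)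
    (H21 : ∀ n m : ℤ, (p - a) * f (n+1) m * h n (m+1)
      - (q - a) * f n (m+1) * h (n+1) m - (p - q) * f n m * h (n+1) (m+1) = 0) :
    ∀ n m : ℤ, (p + a) * f n (m+1) * h (n+1) m
      - (q + a) * f (n+1) m * h n (m+1) - (p - q) * f (n+1) (m+1) * h n m = 0 :=
  stmt_14_general p q a hpq f h H11 H12
end

section
/- If v_a = h/f where f, h are nowhere-zero functions on the lattice satisfying the bilinear equations (p−a)f̃ĥ − (q−a)f̂h̃ − (p−q)f·ĥ̃ = 0 and (p+a)f̂h̃ − (q+a)f̃ĥ − (p−q)f̂̃h = 0, then v_a satisfies the lpmKdV equation v_a((p−a)v̂_a − (q−a)ṽ_a) = v̂̃_a((p+a)ṽ_a − (q+a)v̂_a). -/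
/-! Dividing the first bilinear equation by `f̃ f̂` gives
`(p−a)v̂ − (q−a)ṽ = (p−q) f ĥ̃ / (f̃ f̂)`, and the second one (the same equation with `a ↦ −a`
and the roles of `f, h` and `f̂̃, ĥ̃` exchanged) gives `(p+a)ṽ − (q+a)v̂ = (p−q) f̂̃ h / (f̃ f̂)`.
Multiplying by `v = h/f` and `v̂̃ = ĥ̃/f̂̃` respectively, both sides of the lpmKdV equation
become `(p−q) h ĥ̃ / (f̃ f̂)`. -/

theorem sub_mul_div_eq_of_bilinear {K : Type*} [Field K] {p q a f f₁ f₂ h₁ h₂ g : K}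
    (hf₁ : f₁ ≠ 0) (hf₂ : f₂ ≠ 0)
    (H : (p - a) * f₁ * h₂ - (q - a) * f₂ * h₁ - (p - q) * f * g = 0) :
    (p - a) * (h₂ / f₂) - (q - a) * (h₁ / f₁) = (p - q) * f * g / (f₁ * f₂) := by
  field_simp
  linear_combination H

theorem stmt_15_general (p q a : ℝ)
    (f h : ℤ → ℤ → ℝ)
    (hf : ∀ n m : ℤ, f n m ≠ 0)
    (v : ℤ → ℤ → ℝ) (hv : ∀ n m : ℤ, v n m = h n m / f n m)
    (H21 : ∀ n m : ℤ, (p - a) * f (n+1) m * h n (m+1)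
      - (q - a) * f n (m+1) * h (n+1) m - (p - q) * f n m * h (n+1) (m+1) = 0)
    (H22 : ∀ n m : ℤ, (p + a) * f n (m+1) * h (n+1) m
      - (q + a) * f (n+1) m * h n (m+1) - (p - q) * f (n+1) (m+1) * h n m = 0)
    (n m : ℤ) :
    v n m * ((p - a) * v n (m+1) - (q - a) * v (n+1) m)
      = v (n+1) (m+1) * ((p + a) * v (n+1) m - (q + a) * v n (m+1)) := by
  have hminus := sub_mul_div_eq_of_bilinear (hf (n+1) m) (hf n (m+1)) (H21 n m)
  have hplus := sub_mul_div_eq_of_bilinear (a := -a) (hf n (m+1)) (hf (n+1) m)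
    (by simpa only [sub_neg_eq_add] using H22 n m)
  simp only [sub_neg_eq_add] at hplus
  simp only [hv, hminus, hplus]
  field_simp [hf n m, hf (n+1) (m+1)]

/-- If `v_a = h/f` with `f, h` nowhere zero satisfying the two bilinear equations
`(p−a)f̃ĥ − (q−a)f̂h̃ − (p−q)f·ĥ̃ = 0` and `(p+a)f̂h̃ − (q+a)f̃ĥ − (p−q)f̂̃h = 0`,
then `v_a` satisfies the lpmKdV equation. -/
theorem stmt_15 (p q a : ℝ)
    (f h : ℤ → ℤ → ℝ)
    (hf : ∀ n m : ℤ, f n m ≠ 0) (hh : ∀ n m : ℤ, h n m ≠ 0)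
    (v : ℤ → ℤ → ℝ) (hv : ∀ n m : ℤ, v n m = h n m / f n m)
    (H21 : ∀ n m : ℤ, (p - a) * f (n+1) m * h n (m+1)
      - (q - a) * f n (m+1) * h (n+1) m - (p - q) * f n m * h (n+1) (m+1) = 0)
    (H22 : ∀ n m : ℤ, (p + a) * f n (m+1) * h (n+1) m
      - (q + a) * f (n+1) m * h n (m+1) - (p - q) * f (n+1) (m+1) * h n m = 0)
    (n m : ℤ) :
    v n m * ((p - a) * v n (m+1) - (q - a) * v (n+1) m)
      = v (n+1) (m+1) * ((p + a) * v (n+1) m - (q + a) * v n (m+1)) :=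
  stmt_15_general p q a f h hf v hv H21 H22 n m
end

section
/- If w = g/f where f, g are functions on the lattice with f nowhere zero, satisfying the bilinear equations ĝf̃ − g̃f̂ + (p−q)(f̂f̃ − f·f̂̃) = 0 and g·f̂̃ − ĝ̃f + (p+q)(f·f̂̃ − f̂f̃) = 0, then w satisfies the lpKdV equation (p−q+ŵ−w̃)(p+q+w−ŵ̃) = p²−q². -/
/-!
Each bilinear equation expresses one factor of the lpKdV equation as `p ∓ q` times a ratio of
products of `f` around the plaquette, and the two ratios are reciprocal.
-/

theorem add_div_sub_div_eq_of_bilinear {K : Type*} [Field K] {s a b A B C : K}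
    (hA : A ≠ 0) (hB : B ≠ 0) (h : a * B - b * A + s * (A * B - C) = 0) :
    s + a / A - b / B = s * C / (A * B) := by
  field_simp
  linear_combination h

/-- If `w = g/f` with `f` nowhere zero satisfying the bilinear equations
`ĝf̃ − g̃f̂ + (p−q)(f̂f̃ − f·f̂̃) = 0` and `g·f̂̃ − ĝ̃f + (p+q)(f·f̂̃ − f̂f̃) = 0`,
then `w` satisfies the lpKdV equation `(p−q+ŵ−w̃)(p+q+w−ŵ̃) = p²−q²`. -/
theorem stmt_16 (p q : ℝ)
    (f g : ℤ → ℤ → ℝ) (hf : ∀ n m : ℤ, f n m ≠ 0)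
    (w : ℤ → ℤ → ℝ) (hw : ∀ n m : ℤ, w n m = g n m / f n m)
    (H1 : ∀ n m : ℤ, g n (m+1) * f (n+1) m - g (n+1) m * f n (m+1)
      + (p - q) * (f n (m+1) * f (n+1) m - f n m * f (n+1) (m+1)) = 0)
    (H2 : ∀ n m : ℤ, g n m * f (n+1) (m+1) - g (n+1) (m+1) * f n m
      + (p + q) * (f n m * f (n+1) (m+1) - f n (m+1) * f (n+1) m) = 0)
    (n m : ℤ) :
    (p - q + w n (m+1) - w (n+1) m) * (p + q + w n m - w (n+1) (m+1)) = p^2 - q^2 := by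
  simp only [hw]
  rw [add_div_sub_div_eq_of_bilinear (hf _ _) (hf _ _) (H1 n m),
    add_div_sub_div_eq_of_bilinear (hf _ _) (hf _ _) (H2 n m)]
  field_simp [hf]
  ring
end
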